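/- (Global Ditzian–Totik-type upper bound via smooth functions) Let g : [0,1] → ℝ be absolutely continuous with ‖φ g'‖_∞ < ∞, where φ(x) = √(x(1−x)). Then for every n ≥ 2, 0 ≤ α ≤ 1, ρ > 0 and x ∈ (0,1), |G_{n,ρ}^{(α)}(g; x) − g(x)| ≤ 2√2 ‖φ g'‖_∞ φ(x)^{-1} √(G_{n,ρ}^{(α)}((t−x)²; x)). -/

import Mathlib

open MeasureTheory Filter Finset Real

/-- Generalized Bernstein basis function `p_{n,k}^{(α)}(x)` (polynomial form). -/
noncomputable def bernP (n k : ℕ) (α x : ℝ) : ℝ :=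
  ((n - 2).choose k : ℝ) * (1 - α) * x ^ k * (1 - x) ^ (n - k - 1)
    + (if 2 ≤ k then (((n - 2).choose (k - 2)) : ℝ) else 0) * (1 - α) * x ^ (k - 1) * (1 - x) ^ (n - k)
    + (n.choose k : ℝ) * α * x ^ k * (1 - x) ^ (n - k)

/-- Euler Beta function. -/
noncomputable def betaR (e f : ℝ) : ℝ := Real.Gamma e * Real.Gamma f / Real.Gamma (e + f)

/-- The Beta density `μ_{n,ρ,k}`. -/
noncomputable def muD (n k : ℕ) (ρ t : ℝ) : ℝ :=
  t ^ ((k : ℝ) * ρ) * (1 - t) ^ (((n : ℝ) - (k : ℝ)) * ρ) /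
    betaR ((k : ℝ) * ρ + 1) (((n : ℝ) - (k : ℝ)) * ρ + 1)

/-- The generalized Bernstein–Durrmeyer operator. -/
noncomputable def G (n : ℕ) (α ρ : ℝ) (f : ℝ → ℝ) (x : ℝ) : ℝ :=
  ∑ k ∈ Finset.range (n + 1), bernP n k α x * ∫ t in (0:ℝ)..1, muD n k ρ t * f t

/-!
Write `G n α ρ f x = ∫₀¹ K(t) f(t) dt`, where `K = ∑ₖ p_{n,k}^{(α)}(x) μ_{n,ρ,k}` is a continuous
probability density on `[0,1]` (the basis functions sum to one and each Beta density has mass one).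
Since `1/φ(u) ≤ u^{-1/2} + (1-u)^{-1/2}`, integrating `g'` gives
`|g t - g x| ≤ 2C(|√t - √x| + |√(1-t) - √(1-x)|) ≤ 2√2 C |t - x| / φ(x)`;
in particular `g` is continuous. Then `|G g x - g x| ≤ ∫ K |g t - g x|`, and Cauchy–Schwarz for the
probability density `K` bounds `∫ K |t - x|` by `√(∫ K (t - x)²) = √(G ((t - x)²) x)`.
-/

lemma betaR_pos {e f : ℝ} (he : 0 < e) (hf : 0 < f) : 0 < betaR e f :=
  ProbabilityTheory.beta_pos he hf

lemma integral_rpow_mul_one_sub_rpow {a b : ℝ} (ha : 0 ≤ a) (hb : 0 ≤ b) :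
    ∫ t in (0:ℝ)..1, t ^ a * (1 - t) ^ b = betaR (a + 1) (b + 1) := by
  have hcast : Complex.betaIntegral ((a + 1 : ℝ) : ℂ) ((b + 1 : ℝ) : ℂ)
      = ((∫ t in (0:ℝ)..1, t ^ a * (1 - t) ^ b : ℝ) : ℂ) := by
    rw [Complex.betaIntegral, ← intervalIntegral.integral_ofReal]
    refine intervalIntegral.integral_congr fun t ht => ?_
    rw [Set.uIcc_of_le zero_le_one] at ht
    push_cast
    rw [add_sub_cancel_right, add_sub_cancel_right, Complex.ofReal_cpow ht.1,
      Complex.ofReal_cpow (sub_nonneg.2 ht.2), Complex.ofReal_sub, Complex.ofReal_one]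
  rw [betaR, ← ProbabilityTheory.beta, ProbabilityTheory.beta_eq_betaIntegralReal _ _
    (by linarith) (by linarith), hcast, Complex.ofReal_re]

lemma sum_choose_mul_pow_mul_one_sub_pow (m : ℕ) (x c : ℝ) :
    ∑ k ∈ range (m + 1), (m.choose k : ℝ) * c * x ^ k * (1 - x) ^ (m - k) = c := by
  have := (add_pow x (1 - x) m).symm
  rw [add_sub_cancel, one_pow] at this
  calc _ = c * ∑ k ∈ range (m + 1), x ^ k * (1 - x) ^ (m - k) * (m.choose k : ℝ) := by
        rw [mul_sum]; exact sum_congr rfl fun k _ => by ring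
    _ = c := by rw [this, mul_one]

lemma sum_bernP {n : ℕ} (hn : 2 ≤ n) (α x : ℝ) :
    ∑ k ∈ range (n + 1), bernP n k α x = 1 := by
  obtain ⟨m, rfl⟩ := Nat.exists_eq_add_of_le' hn
  have hlow : ∑ k ∈ range (m + 2 + 1),
      (m.choose k : ℝ) * (1 - α) * x ^ k * (1 - x) ^ (m + 2 - k - 1) = (1 - α) * (1 - x) := by
    rw [sum_range_succ, sum_range_succ, Nat.choose_eq_zero_of_lt (by omega),
      Nat.choose_eq_zero_of_lt (by omega),
      ← sum_choose_mul_pow_mul_one_sub_pow m x ((1 - α) * (1 - x))]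
    simp only [Nat.cast_zero, zero_mul, add_zero]
    refine sum_congr rfl fun k hk => ?_
    rw [show m + 2 - k - 1 = m - k + 1 by grind]
    ring
  have hhigh : ∑ k ∈ range (m + 2 + 1), (if 2 ≤ k then (m.choose (k - 2) : ℝ) else 0)
      * (1 - α) * x ^ (k - 1) * (1 - x) ^ (m + 2 - k) = (1 - α) * x := by
    rw [sum_range_succ', sum_range_succ', ← sum_choose_mul_pow_mul_one_sub_pow m x ((1 - α) * x)]
    simp only [if_neg (by omega : ¬ 2 ≤ 0), if_neg (by omega : ¬ 2 ≤ 0 + 1), zero_mul, add_zero]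
    refine sum_congr rfl fun k _ => ?_
    rw [if_pos (by omega), show k + 1 + 1 - 2 = k by omega, show k + 1 + 1 - 1 = k + 1 by omega,
      show m + 2 - (k + 1 + 1) = m - k by omega]
    ring
  simp only [bernP, Nat.add_sub_cancel, sum_add_distrib]
  rw [hlow, hhigh, sum_choose_mul_pow_mul_one_sub_pow]
  ring

lemma bernP_nonneg {n k : ℕ} {α x : ℝ} (hα : α ∈ Set.Icc (0:ℝ) 1)
    (hx : x ∈ Set.Icc (0:ℝ) 1) : 0 ≤ bernP n k α x := by
  obtain ⟨hα0, hα1⟩ := hα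
  obtain ⟨hx0, hx1⟩ := hx
  have : 0 ≤ 1 - α := by linarith
  have : 0 ≤ 1 - x := by linarith
  unfold bernP
  split_ifs <;> positivity

section muD

variable {n k : ℕ} {ρ : ℝ}

lemma continuous_muD (hρ : 0 ≤ ρ) (hk : k ≤ n) : Continuous (muD n k ρ) := by
  have hnk : (0:ℝ) ≤ ((n : ℝ) - k) * ρ := mul_nonneg (sub_nonneg.2 (by exact_mod_cast hk)) hρ
  unfold muD
  exact ((continuous_id.rpow_const fun _ => Or.inr (by positivity)).mul
    ((continuous_const.sub continuous_id).rpow_const fun _ => Or.inr hnk)).div_const _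

lemma muD_nonneg (hρ : 0 ≤ ρ) (hk : k ≤ n) {t : ℝ} (ht : t ∈ Set.Icc (0:ℝ) 1) :
    0 ≤ muD n k ρ t := by
  have hnk : (0:ℝ) ≤ ((n : ℝ) - k) * ρ := mul_nonneg (sub_nonneg.2 (by exact_mod_cast hk)) hρ
  exact div_nonneg (mul_nonneg (rpow_nonneg ht.1 _) (rpow_nonneg (sub_nonneg.2 ht.2) _))
    (betaR_pos (by positivity) (by linarith)).le

lemma integral_muD (hρ : 0 ≤ ρ) (hk : k ≤ n) : ∫ t in (0:ℝ)..1, muD n k ρ t = 1 := by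
  have hnk : (0:ℝ) ≤ ((n : ℝ) - k) * ρ := mul_nonneg (sub_nonneg.2 (by exact_mod_cast hk)) hρ
  unfold muD
  rw [intervalIntegral.integral_div, integral_rpow_mul_one_sub_rpow (by positivity) hnk,
    div_self (betaR_pos (by positivity) (by linarith)).ne']

end muD

noncomputable def durrmeyerKernel (n : ℕ) (α ρ x t : ℝ) : ℝ :=
  ∑ k ∈ range (n + 1), bernP n k α x * muD n k ρ t

section durrmeyerKernel

variable {n : ℕ} {α ρ x : ℝ}

lemma continuous_durrmeyerKernel (hρ : 0 ≤ ρ) : Continuous (durrmeyerKernel n α ρ x) :=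
  continuous_finsetSum _ fun _ hk =>
    continuous_const.mul (continuous_muD hρ (Nat.lt_succ_iff.1 (mem_range.1 hk)))

lemma durrmeyerKernel_nonneg (hα : α ∈ Set.Icc (0:ℝ) 1) (hρ : 0 ≤ ρ)
    (hx : x ∈ Set.Icc (0:ℝ) 1) {t : ℝ} (ht : t ∈ Set.Icc (0:ℝ) 1) :
    0 ≤ durrmeyerKernel n α ρ x t :=
  sum_nonneg fun _ hk => mul_nonneg (bernP_nonneg hα hx)
    (muD_nonneg hρ (Nat.lt_succ_iff.1 (mem_range.1 hk)) ht)

lemma integral_durrmeyerKernel (hn : 2 ≤ n) (hρ : 0 ≤ ρ) :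
    ∫ t in (0:ℝ)..1, durrmeyerKernel n α ρ x t = 1 := by
  unfold durrmeyerKernel
  rw [intervalIntegral.integral_finsetSum fun k hk =>
    ((continuous_muD hρ (Nat.lt_succ_iff.1 (mem_range.1 hk))).const_mul _).intervalIntegrable _ _]
  refine (sum_congr rfl fun k hk => ?_).trans (sum_bernP hn α x)
  rw [intervalIntegral.integral_const_mul, integral_muD hρ (Nat.lt_succ_iff.1 (mem_range.1 hk)),
    mul_one]

lemma G_eq_integral_durrmeyerKernel_mul (hρ : 0 ≤ ρ) {f : ℝ → ℝ}
    (hf : ContinuousOn f (Set.Icc 0 1)) :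
    G n α ρ f x = ∫ t in (0:ℝ)..1, durrmeyerKernel n α ρ x t * f t := by
  have hint : ∀ k ≤ n, IntervalIntegrable (fun t => muD n k ρ t * f t) volume 0 1 := fun k hk =>
    ((continuous_muD hρ hk).continuousOn.mul hf).intervalIntegrable_of_Icc zero_le_one
  simp only [durrmeyerKernel, sum_mul, mul_assoc]
  rw [intervalIntegral.integral_finsetSum fun k hk =>
    (hint k (Nat.lt_succ_iff.1 (mem_range.1 hk))).const_mul _]
  simp only [intervalIntegral.integral_const_mul, G]

end durrmeyerKernel

section ProbabilityDensity

variable {a b : ℝ} {m : ℝ → ℝ}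

lemma integral_mul_abs_le_sqrt_integral_mul_sq (hab : a ≤ b) (hm : Continuous m)
    (hm0 : ∀ t ∈ Set.Icc a b, 0 ≤ m t) (hm1 : ∫ t in a..b, m t = 1) {h : ℝ → ℝ}
    (hh : Continuous h) :
    ∫ t in a..b, m t * |h t| ≤ √(∫ t in a..b, m t * h t ^ 2) := by
  set c := ∫ t in a..b, m t * |h t|
  have hvar : ∫ t in a..b, m t * (|h t| - c) ^ 2 = (∫ t in a..b, m t * h t ^ 2) - c ^ 2 := by
    have hpt : ∀ t, m t * (|h t| - c) ^ 2 = m t * h t ^ 2 - 2 * c * (m t * |h t|) + c ^ 2 * m t :=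
      fun t => by rw [← sq_abs (h t)]; ring
    simp only [hpt]
    rw [intervalIntegral.integral_add, intervalIntegral.integral_sub,
      intervalIntegral.integral_const_mul, intervalIntegral.integral_const_mul, hm1]
    · ring
    all_goals apply Continuous.intervalIntegrable; fun_prop
  have hnonneg : 0 ≤ ∫ t in a..b, m t * (|h t| - c) ^ 2 :=
    intervalIntegral.integral_nonneg hab fun t ht => mul_nonneg (hm0 t ht) (sq_nonneg _)
  exact Real.le_sqrt_of_sq_le (by linarith)

lemma abs_integral_mul_sub_le_mul_sqrt (hab : a ≤ b) (hm : Continuous m)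
    (hm0 : ∀ t ∈ Set.Icc a b, 0 ≤ m t) (hm1 : ∫ t in a..b, m t = 1) {f : ℝ → ℝ}
    (hf : ContinuousOn f (Set.Icc a b)) {L x : ℝ} (hL : 0 ≤ L)
    (hlip : ∀ t ∈ Set.Icc a b, |f t - f x| ≤ L * |t - x|) :
    |(∫ t in a..b, m t * f t) - f x| ≤ L * √(∫ t in a..b, m t * (t - x) ^ 2) := by
  have hmf : ContinuousOn (fun t => m t * (f t - f x)) (Set.Icc a b) :=
    hm.continuousOn.mul (hf.sub continuousOn_const)
  have hcentred : (∫ t in a..b, m t * f t) - f x = ∫ t in a..b, m t * (f t - f x) := by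
    have hint : IntervalIntegrable (fun t => m t * f t) volume a b :=
      (hm.continuousOn.mul hf).intervalIntegrable_of_Icc hab
    simp only [mul_sub]
    rw [intervalIntegral.integral_sub hint (hm.intervalIntegrable _ _ |>.mul_const _),
      intervalIntegral.integral_mul_const, hm1, one_mul]
  calc |(∫ t in a..b, m t * f t) - f x|
      ≤ ∫ t in a..b, |m t * (f t - f x)| := by
        rw [hcentred]; exact intervalIntegral.abs_integral_le_integral_abs hab
    _ ≤ ∫ t in a..b, L * (m t * |t - x|) := by
        refine intervalIntegral.integral_mono_on hab (hmf.abs.intervalIntegrable_of_Icc hab)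
          (Continuous.intervalIntegrable (by fun_prop) _ _) fun t ht => ?_
        rw [abs_mul, abs_of_nonneg (hm0 t ht), mul_left_comm]
        exact mul_le_mul_of_nonneg_left (hlip t ht) (hm0 t ht)
    _ ≤ L * √(∫ t in a..b, m t * (t - x) ^ 2) := by
        rw [intervalIntegral.integral_const_mul]
        exact mul_le_mul_of_nonneg_left (integral_mul_abs_le_sqrt_integral_mul_sq hab hm hm0 hm1
          (continuous_sub_right x)) hL

end ProbabilityDensity

lemma one_le_sqrt_add_sqrt_one_sub {u : ℝ} (hu : u ∈ Set.Icc (0:ℝ) 1) :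
    1 ≤ √u + √(1 - u) := by
  obtain ⟨hu0, hu1⟩ := hu
  have h1 : u ≤ √u := Real.le_sqrt_of_sq_le (by nlinarith)
  have h2 : 1 - u ≤ √(1 - u) := Real.le_sqrt_of_sq_le (by nlinarith)
  linarith

lemma sqrt_add_sqrt_one_sub_le_sqrt_two {u : ℝ} (hu : u ∈ Set.Icc (0:ℝ) 1) :
    √u + √(1 - u) ≤ √2 := by
  have h1 := Real.sq_sqrt hu.1
  have h2 := Real.sq_sqrt (sub_nonneg.2 hu.2)
  exact Real.le_sqrt_of_sq_le (by nlinarith [sq_nonneg (√u - √(1 - u))])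

lemma inv_sqrt_mul_one_sub_le {u : ℝ} (hu : u ∈ Set.Ioo (0:ℝ) 1) :
    (√(u * (1 - u)))⁻¹ ≤ u ^ (-(1 / 2) : ℝ) + (1 - u) ^ (-(1 / 2) : ℝ) := by
  obtain ⟨hu0, hu1⟩ := hu
  have hsu : 0 < √u := Real.sqrt_pos.2 hu0
  have hsu' : 0 < √(1 - u) := Real.sqrt_pos.2 (by linarith)
  rw [rpow_neg hu0.le, rpow_neg (by linarith), ← sqrt_eq_rpow, ← sqrt_eq_rpow,
    Real.sqrt_mul hu0.le, inv_add_inv hsu.ne' hsu'.ne', inv_eq_one_div]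
  exact div_le_div_of_nonneg_right (one_le_sqrt_add_sqrt_one_sub ⟨hu0.le, hu1.le⟩)
    (by positivity)

lemma intervalIntegrable_one_sub_rpow_neg_half (s t : ℝ) :
    IntervalIntegrable (fun u : ℝ => (1 - u) ^ (-(1 / 2) : ℝ)) volume s t := by
  simpa using ((intervalIntegral.intervalIntegrable_rpow' (r := -(1 / 2)) (by norm_num)
    (a := 1 - t) (b := 1 - s)).comp_sub_left 1).symm

lemma integral_rpow_neg_half_add (s t : ℝ) :
    ∫ u in s..t, (u ^ (-(1 / 2) : ℝ) + (1 - u) ^ (-(1 / 2) : ℝ))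
      = 2 * ((√t - √s) + (√(1 - s) - √(1 - t))) := by
  rw [intervalIntegral.integral_add (intervalIntegral.intervalIntegrable_rpow' (by norm_num))
      (intervalIntegrable_one_sub_rpow_neg_half s t),
    intervalIntegral.integral_comp_sub_left (fun u : ℝ => u ^ (-(1 / 2) : ℝ)) 1,
    integral_rpow (Or.inl (by norm_num)), integral_rpow (Or.inl (by norm_num))]
  norm_num [← sqrt_eq_rpow]
  ring


lemma abs_integral_le_of_sqrt_mul_abs_le {g' : ℝ → ℝ} {C : ℝ} (hC : 0 ≤ C)
    (hbound : ∀ u ∈ Set.Ioo (0:ℝ) 1, √(u * (1 - u)) * |g' u| ≤ C) {s t : ℝ}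
    (hs : s ∈ Set.Icc (0:ℝ) 1) (ht : t ∈ Set.Icc (0:ℝ) 1) :
    |∫ u in s..t, g' u| ≤ 2 * C * (|√t - √s| + |√(1 - t) - √(1 - s)|) := by
  -- `u = 1` is discarded because the majorant there is `C * (1 + 0 ^ (-1/2)) = C`, by the
  -- `rpow` convention `0 ^ y = 0`; no integrability of `g'` is needed for the comparison.
  have hae : ∀ᵐ u ∂volume.restrict (Set.uIoc s t),
      ‖g' u‖ ≤ C * (u ^ (-(1 / 2) : ℝ) + (1 - u) ^ (-(1 / 2) : ℝ)) := by
    filter_upwards [ae_restrict_mem measurableSet_uIoc,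
      ae_restrict_of_ae (volume.ae_ne (1:ℝ))] with u hu hu1
    have hu01 : u ∈ Set.Ioo (0:ℝ) 1 := by
      rw [Set.mem_uIoc] at hu
      constructor <;> rcases hu with hu | hu
      all_goals first | linarith [hs.1, ht.1] | exact lt_of_le_of_ne (by linarith [hs.2, ht.2]) hu1
    have hφ : 0 < √(u * (1 - u)) := Real.sqrt_pos.2 (mul_pos hu01.1 (by linarith [hu01.2]))
    calc ‖g' u‖ = (√(u * (1 - u)))⁻¹ * (√(u * (1 - u)) * |g' u|) := by
          rw [Real.norm_eq_abs, inv_mul_cancel_left₀ hφ.ne']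
      _ ≤ (√(u * (1 - u)))⁻¹ * C := mul_le_mul_of_nonneg_left (hbound u hu01) (by positivity)
      _ ≤ C * (u ^ (-(1 / 2) : ℝ) + (1 - u) ^ (-(1 / 2) : ℝ)) := by
          rw [mul_comm]; exact mul_le_mul_of_nonneg_left (inv_sqrt_mul_one_sub_le hu01) hC
  calc |∫ u in s..t, g' u|
      ≤ |∫ u in s..t, C * (u ^ (-(1 / 2) : ℝ) + (1 - u) ^ (-(1 / 2) : ℝ))| :=
        intervalIntegral.norm_integral_le_abs_of_norm_le hae
          (((intervalIntegral.intervalIntegrable_rpow' (by norm_num)).add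
            (intervalIntegrable_one_sub_rpow_neg_half s t)).const_mul C)
    _ = 2 * C * |(√t - √s) + (√(1 - s) - √(1 - t))| := by
        rw [intervalIntegral.integral_const_mul, integral_rpow_neg_half_add, abs_mul, abs_mul,
          abs_of_nonneg hC, abs_two]
        ring
    _ ≤ 2 * C * (|√t - √s| + |√(1 - t) - √(1 - s)|) := by
        rw [abs_sub_comm (√(1 - t))]
        exact mul_le_mul_of_nonneg_left (abs_add_le _ _) (by positivity)

lemma continuousOn_of_abs_sub_le {g : ℝ → ℝ} {C : ℝ}
    (hmod : ∀ s ∈ Set.Icc (0:ℝ) 1, ∀ t ∈ Set.Icc (0:ℝ) 1,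
      |g t - g s| ≤ C * (|√t - √s| + |√(1 - t) - √(1 - s)|)) :
    ContinuousOn g (Set.Icc 0 1) := by
  intro s hs
  have hD : Continuous fun t => C * (|√t - √s| + |√(1 - t) - √(1 - s)|) := by fun_prop
  rw [ContinuousWithinAt, tendsto_iff_dist_tendsto_zero]
  refine squeeze_zero' (Eventually.of_forall fun _ => dist_nonneg) ?_
    (by simpa using (hD.continuousWithinAt (s := Set.Icc 0 1) (x := s)).tendsto)
  filter_upwards [self_mem_nhdsWithin] with t ht
  rw [Real.dist_eq]
  exact hmod s hs t ht

lemma abs_sqrt_sub_sqrt_le {s t : ℝ} (hs : 0 < s) (ht : 0 ≤ t) :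
    |√t - √s| ≤ |t - s| / √s := by
  have hss : 0 < √s := Real.sqrt_pos.2 hs
  have hdiff : (√t - √s) * (√t + √s) = t - s := by
    linear_combination Real.sq_sqrt ht - Real.sq_sqrt hs.le
  rw [le_div_iff₀ hss, ← hdiff, abs_mul, abs_of_nonneg (by positivity : 0 ≤ √t + √s)]
  exact mul_le_mul_of_nonneg_left (le_add_of_nonneg_left (Real.sqrt_nonneg t)) (abs_nonneg _)

lemma abs_sqrt_sub_add_abs_sqrt_one_sub_le {x t : ℝ} (hx : x ∈ Set.Ioo (0:ℝ) 1)
    (ht : t ∈ Set.Icc (0:ℝ) 1) :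
    |√t - √x| + |√(1 - t) - √(1 - x)| ≤ √2 * (√(x * (1 - x)))⁻¹ * |t - x| := by
  obtain ⟨hx0, hx1⟩ := hx
  have hsx : 0 < √x := Real.sqrt_pos.2 hx0
  have hsx' : 0 < √(1 - x) := Real.sqrt_pos.2 (by linarith)
  calc |√t - √x| + |√(1 - t) - √(1 - x)|
      ≤ |t - x| / √x + |(1 - t) - (1 - x)| / √(1 - x) :=
        add_le_add (abs_sqrt_sub_sqrt_le hx0 ht.1)
          (abs_sqrt_sub_sqrt_le (by linarith) (by linarith [ht.2]))
    _ = (√x + √(1 - x)) * (√(x * (1 - x)))⁻¹ * |t - x| := by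
        rw [show (1 - t) - (1 - x) = -(t - x) by ring, abs_neg, Real.sqrt_mul hx0.le]
        field_simp
        ring
    _ ≤ √2 * (√(x * (1 - x)))⁻¹ * |t - x| := by
        gcongr
        exact sqrt_add_sqrt_one_sub_le_sqrt_two ⟨hx0.le, hx1.le⟩

theorem G_ditzian_totik_bound (g g' : ℝ → ℝ) (C : ℝ) (hC : 0 ≤ C)
    (hFTC : ∀ s ∈ Set.Icc (0:ℝ) 1, ∀ t ∈ Set.Icc (0:ℝ) 1,
      g t - g s = ∫ u in s..t, g' u)
    (hbound : ∀ u ∈ Set.Ioo (0:ℝ) 1, Real.sqrt (u * (1 - u)) * |g' u| ≤ C)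
    (n : ℕ) (hn : 2 ≤ n) (α ρ : ℝ)
    (hα : α ∈ Set.Icc (0:ℝ) 1) (hρ : 0 < ρ) (x : ℝ) (hx : x ∈ Set.Ioo (0:ℝ) 1) :
    |G n α ρ g x - g x| ≤
      2 * Real.sqrt 2 * C * (Real.sqrt (x * (1 - x)))⁻¹ *
        Real.sqrt (G n α ρ (fun t => (t - x) ^ 2) x) := by
  have hmod : ∀ s ∈ Set.Icc (0:ℝ) 1, ∀ t ∈ Set.Icc (0:ℝ) 1,
      |g t - g s| ≤ 2 * C * (|√t - √s| + |√(1 - t) - √(1 - s)|) := fun s hs t ht => by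
    rw [hFTC s hs t ht]
    exact abs_integral_le_of_sqrt_mul_abs_le hC hbound hs ht
  have hcont : ContinuousOn g (Set.Icc 0 1) := continuousOn_of_abs_sub_le hmod
  have hx' : x ∈ Set.Icc (0:ℝ) 1 := Set.Ioo_subset_Icc_self hx
  rw [G_eq_integral_durrmeyerKernel_mul hρ.le hcont,
    G_eq_integral_durrmeyerKernel_mul hρ.le (by fun_prop)]
  refine abs_integral_mul_sub_le_mul_sqrt zero_le_one (continuous_durrmeyerKernel hρ.le)
    (fun t ht => durrmeyerKernel_nonneg hα hρ.le hx' ht) (integral_durrmeyerKernel hn hρ.le)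
    hcont (by positivity) fun t ht => ?_
  calc |g t - g x| ≤ 2 * C * (|√t - √x| + |√(1 - t) - √(1 - x)|) := hmod x hx' t ht
    _ ≤ 2 * C * (√2 * (√(x * (1 - x)))⁻¹ * |t - x|) :=
        mul_le_mul_of_nonneg_left (abs_sqrt_sub_add_abs_sqrt_one_sub_le hx ht) (by positivity)
    _ = 2 * √2 * C * (√(x * (1 - x)))⁻¹ * |t - x| := by ring
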